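/- Let G be the complete p-partite graph K_{r,...,r} with p parts each of size r (p, r ≥ 2). For integers q, j with 2 ≤ q ≤ r and 1 ≤ j ≤ p-1, the maximum number of edges in an induced subgraph of G on (q-1)p + j vertices equals (q-1)²p(p-1)/2 + j(q-1)(p-1) + j(j-1)/2. -/

import Mathlib

/-- The complete `p`-partite graph `K_{r,...,r}` with `p` parts of size `r`:
vertices are pairs `(part, index)`, and two vertices are adjacent iff they lie
in different parts. -/
def completeEqPartite (p r : ℕ) : SimpleGraph (Fin p × Fin r) where
  Adj u v := u.1 ≠ v.1
  symm := ⟨fun _ _ h => Ne.symm h⟩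
  loopless := ⟨fun _ h => h rfl⟩

instance (p r : ℕ) : DecidableRel (completeEqPartite p r).Adj :=
  fun u v => inferInstanceAs (Decidable (u.1 ≠ v.1))

/-- The number of edges of `G` with both endpoints in `A`
(counted via ordered pairs, divided by 2). -/
def edgesIn {V : Type*} [Fintype V] [DecidableEq V] (G : SimpleGraph V)
    [DecidableRel G.Adj] (A : Finset V) : ℕ :=
  (Finset.univ.filter
    (fun pr : V × V => pr.1 ∈ A ∧ pr.2 ∈ A ∧ G.Adj pr.1 pr.2)).card / 2

/-- `E_G(k)`: the maximum number of edges in an induced subgraph on `k` vertices. -/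
def maxEdges {V : Type*} [Fintype V] [DecidableEq V] (G : SimpleGraph V)
    [DecidableRel G.Adj] (k : ℕ) : ℕ :=
  (Finset.powersetCard k (Finset.univ : Finset V)).sup (edgesIn G)

/-!
Write `c i` for the number of chosen vertices in part `i`. A `k`-set `A` spans
`(k ^ 2 - ∑ i, c i ^ 2) / 2` edges, so maximizing edges means minimizing `∑ i, c i ^ 2`
subject to `∑ i, c i = k`. For `k = s * p + j` with `j ≤ p`, the integrality of the `c i` gives
`(c i - s) * (c i - s - 1) ≥ 0`, and summing yields
`∑ i, c i ^ 2 ≥ p * s ^ 2 + (2 * s + 1) * j`;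
equality holds for the balanced choice of `s + 1` vertices in `j` parts and `s` in the others,
which is available as long as `s < r`.
-/

open Finset

theorem card_filter_ne_add_sum_sq {α ι : Type*} [DecidableEq ι] [Fintype ι]
    (f : α → ι) (s : Finset α) :
    #{x ∈ s ×ˢ s | f x.1 ≠ f x.2} + ∑ i, #{a ∈ s | f a = i} ^ 2 = #s ^ 2 := by
  have hdiag : #{x ∈ s ×ˢ s | f x.1 = f x.2} = ∑ i, #{a ∈ s | f a = i} ^ 2 := by
    rw [card_eq_sum_card_fiberwise (f := fun x => f x.1) (t := univ) (fun _ _ => mem_univ _)]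
    refine sum_congr rfl fun i _ => ?_
    rw [sq, ← card_product, filter_filter]
    congr 1
    ext ⟨a, b⟩
    simp only [mem_filter, mem_product]
    grind
  rw [← hdiag, add_comm, card_filter_add_card_filter_not, card_product, sq]

theorem edgesIn_completeEqPartite (p r : ℕ) (A : Finset (Fin p × Fin r)) :
    edgesIn (completeEqPartite p r) A = (#A ^ 2 - ∑ i, #{v ∈ A | v.1 = i} ^ 2) / 2 := by
  have hpairs : edgesIn (completeEqPartite p r) A = #{x ∈ A ×ˢ A | x.1.1 ≠ x.2.1} / 2 := by
    unfold edgesIn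
    congr 2
    ext x
    rw [mem_filter, mem_filter, mem_product, and_assoc]
    simp [completeEqPartite]
  have := card_filter_ne_add_sum_sq Prod.fst A
  omega

theorem card_mul_sq_add_le_sum_sq {ι : Type*} [Fintype ι] (c : ι → ℕ) (s j : ℕ)
    (hc : ∑ i, c i = s * Fintype.card ι + j) :
    Fintype.card ι * s ^ 2 + (2 * s + 1) * j ≤ ∑ i, c i ^ 2 := by
  have hterm (i : ι) : (0 : ℤ) ≤ ((c i : ℤ) - s) * ((c i : ℤ) - s - 1) := by
    rcases le_or_gt (c i : ℤ) s with h | h <;> nlinarith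
  have hexpand : ∑ i, ((c i : ℤ) - s) * ((c i : ℤ) - s - 1)
      = ∑ i, (c i : ℤ) ^ 2 - (2 * s + 1) * ∑ i, (c i : ℤ)
        + Fintype.card ι * (s * (s + 1)) := by
    rw [mul_sum, ← sum_sub_distrib, ← nsmul_eq_mul, ← card_univ, ← sum_const,
      ← sum_add_distrib]
    exact sum_congr rfl fun i _ => by ring
  have hsum : ∑ i, (c i : ℤ) = s * Fintype.card ι + j := by exact_mod_cast hc
  have := sum_nonneg fun i (_ : i ∈ univ) => hterm i
  rw [hexpand, hsum] at this
  zify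
  linarith

def balancedSet (p r s j : ℕ) : Finset (Fin p × Fin r) :=
  {v | (v.2 : ℕ) < s + if (v.1 : ℕ) < j then 1 else 0}

theorem card_filter_balancedSet_fst_eq {p r s : ℕ} (j : ℕ) (hs : s < r) (i : Fin p) :
    #{v ∈ balancedSet p r s j | v.1 = i} = s + if (i : ℕ) < j then 1 else 0 := by
  have hfiber : ({v ∈ balancedSet p r s j | v.1 = i} : Finset (Fin p × Fin r))
      = ({i} : Finset (Fin p)) ×ˢ
          ({x | (x : ℕ) < s + if (i : ℕ) < j then 1 else 0} : Finset (Fin r)) := by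
    ext ⟨a, x⟩
    simp only [balancedSet, mem_filter, mem_univ, true_and, mem_product, mem_singleton]
    constructor
    · rintro ⟨hx, rfl⟩
      exact ⟨rfl, hx⟩
    · rintro ⟨rfl, hx⟩
      exact ⟨hx, rfl⟩
  rw [hfiber, card_product, card_singleton, one_mul, Fin.card_filter_val_lt]
  split_ifs <;> omega

theorem Fin.sum_const_add_ite_lt {p : ℕ} (s t j : ℕ) (hj : j ≤ p) :
    ∑ i : Fin p, (s + if (i : ℕ) < j then t else 0) = s * p + t * j := by
  rw [sum_add_distrib, Fin.sum_const, ← sum_filter, Finset.sum_const, card_filter_val_lt,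
    smul_eq_mul, smul_eq_mul, min_eq_right hj]
  ring

theorem maxEdges_completeEqPartite {p r s j : ℕ} (hs : s < r) (hj : j ≤ p) :
    maxEdges (completeEqPartite p r) (s * p + j)
      = ((s * p + j) ^ 2 - (p * s ^ 2 + (2 * s + 1) * j)) / 2 := by
  apply le_antisymm
  · refine Finset.sup_le fun A hA => ?_
    rw [mem_powersetCard] at hA
    have hfibers : ∑ i, #{v ∈ A | v.1 = i} = s * Fintype.card (Fin p) + j := by
      rw [Fintype.card_fin, ← hA.2, card_eq_sum_card_fiberwise fun v _ => mem_univ v.1]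
    have hmin := card_mul_sq_add_le_sum_sq _ s j hfibers
    rw [Fintype.card_fin] at hmin
    rw [edgesIn_completeEqPartite, hA.2]
    omega
  · have hsizes := card_filter_balancedSet_fst_eq (p := p) j hs
    have hcard : #(balancedSet p r s j) = s * p + j := by
      rw [card_eq_sum_card_fiberwise fun v _ => mem_univ v.1, sum_congr rfl fun i _ => hsizes i,
        Fin.sum_const_add_ite_lt s 1 j hj, one_mul]
    have hsq : ∑ i : Fin p, #{v ∈ balancedSet p r s j | v.1 = i} ^ 2
        = p * s ^ 2 + (2 * s + 1) * j := by
      have hexpand (i : Fin p) : (s + if (i : ℕ) < j then 1 else 0) ^ 2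
          = s ^ 2 + if (i : ℕ) < j then 2 * s + 1 else 0 := by
        split_ifs <;> ring
      rw [sum_congr rfl fun i _ => by rw [hsizes i, hexpand i], Fin.sum_const_add_ite_lt _ _ j hj,
        mul_comm]
    calc ((s * p + j) ^ 2 - (p * s ^ 2 + (2 * s + 1) * j)) / 2
        = edgesIn (completeEqPartite p r) (balancedSet p r s j) := by
          rw [edgesIn_completeEqPartite, hcard, hsq]
      _ ≤ maxEdges (completeEqPartite p r) (s * p + j) :=
          le_sup (mem_powersetCard.2 ⟨subset_univ _, hcard⟩)

theorem sq_sub_div_two_eq {p s j : ℕ} (hj : j ≤ p) :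
    ((s * p + j) ^ 2 - (p * s ^ 2 + (2 * s + 1) * j)) / 2
      = s ^ 2 * p * (p - 1) / 2 + j * s * (p - 1) + j * (j - 1) / 2 := by
  have hexpand : (s * p + j) ^ 2
      = (p * s ^ 2 + (2 * s + 1) * j)
        + (s ^ 2 * p * (p - 1) + 2 * (j * s * (p - 1)) + j * (j - 1)) := by
    rcases p with _ | p
    · obtain rfl : j = 0 := by omega
      simp
    rcases j with _ | j <;> simp only [Nat.add_sub_cancel] <;> ring
  obtain ⟨a, ha⟩ : Even (s ^ 2 * p * (p - 1)) := by
    rw [mul_assoc]; exact (Nat.even_mul_pred_self p).mul_left _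
  obtain ⟨b, hb⟩ := Nat.even_mul_pred_self j
  rw [hexpand, Nat.add_sub_cancel_left]
  omega

theorem stmt2_general (p r q j : ℕ) (hq1 : 2 ≤ q) (hq2 : q ≤ r) (hj2 : j ≤ p - 1) :
    maxEdges (completeEqPartite p r) ((q - 1) * p + j) =
      (q - 1) ^ 2 * p * (p - 1) / 2 + j * (q - 1) * (p - 1) + j * (j - 1) / 2 := by
  rw [maxEdges_completeEqPartite (by omega) (by omega), sq_sub_div_two_eq (by omega)]

theorem stmt2 (p r q j : ℕ) (hp : 2 ≤ p) (hr : 2 ≤ r) (hq1 : 2 ≤ q) (hq2 : q ≤ r)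
    (hj1 : 1 ≤ j) (hj2 : j ≤ p - 1) :
    maxEdges (completeEqPartite p r) ((q - 1) * p + j) =
      (q - 1) ^ 2 * p * (p - 1) / 2 + j * (q - 1) * (p - 1) + j * (j - 1) / 2 :=
  stmt2_general p r q j hq1 hq2 hj2
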